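/- arXiv:1404.4962 — 3 statements merged into one kernel-verified Lean document; each statement's English description precedes it below -/
import Mathlib

section
/- The space C_b(X) of bounded continuous functions on X is dense in C_L(μ) with respect to the seminorm ‖h‖_L = sup_{π ∈ Π(μ)} ∫_X |h| dπ. Moreover, the natural inclusion C_b(X) ↪ C_L(μ) is continuous since ‖h‖_L ≤ sup_{x∈X}|h(x)| for every h ∈ C_b(X). Concretely, for any h ∈ C_L(μ), the truncations h^k_k := max{min{k,h},−k} ∈ C_b(X) satisfy ‖h − h^k_k‖_L → 0 as k → ∞. -/
/-! If `|h x| ≤ ∑ i, f i (x i)` with `f i ∈ L¹(μ i)`, the truncation error satisfies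
`|h - h^k_k| ≤ (|h| - k)⁺ ≤ ∑ i, (f i (x i) - k / (n + 1))⁺`. Every coupling integrates the right-hand
side to `∑ i, ∫ (f i - k / (n + 1))⁺ dμ i`, a bound uniform in the coupling which tends to `0` by
dominated convergence. -/

open MeasureTheory Filter Topology

/-- `π` is a transport plan (coupling) on `X = X_1 × ⋯ × X_n` with marginals `μ i`. -/
def IsCoupling {n : ℕ} {X : Fin n → Type*} [∀ i, MeasurableSpace (X i)]
    (μ : ∀ i, Measure (X i)) (π : Measure (∀ i, X i)) : Prop :=
  IsProbabilityMeasure π ∧ ∀ i, π.map (fun x => x i) = μ i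

/-- `h ∈ C_L(μ)`. -/
def MemCL {n : ℕ} {X : Fin n → Type*} [∀ i, TopologicalSpace (X i)]
    [∀ i, MeasurableSpace (X i)]
    (μ : ∀ i, Measure (X i)) (h : (∀ i, X i) → ℝ) : Prop :=
  Continuous h ∧ ∃ f : ∀ i, X i → ℝ,
    (∀ i, Continuous (f i) ∧ Integrable (f i) (μ i)) ∧
    ∀ x, |h x| ≤ ∑ i, f i (x i)

/-- The seminorm `‖h‖_L = sup_{π ∈ Π(μ)} ∫ |h| dπ`. -/
noncomputable def normL {n : ℕ} {X : Fin n → Type*} [∀ i, TopologicalSpace (X i)]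
    [∀ i, MeasurableSpace (X i)]
    (μ : ∀ i, Measure (X i)) (h : (∀ i, X i) → ℝ) : ℝ :=
  sSup {r : ℝ | ∃ π : Measure (∀ i, X i), IsCoupling μ π ∧ r = ∫ x, |h x| ∂π}

lemma abs_max_min_le (t : ℝ) {k : ℝ} (hk : 0 ≤ k) : |max (min t k) (-k)| ≤ k :=
  abs_le.mpr ⟨le_max_right _ _, max_le (min_le_right _ _) (by linarith)⟩

lemma abs_sub_max_min_le (t : ℝ) {k : ℝ} (hk : 0 ≤ k) :
    |t - max (min t k) (-k)| ≤ max (|t| - k) 0 := by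
  rcases le_total t (-k) with h | h
  · rw [min_eq_left (by linarith : t ≤ k), max_eq_right h, abs_of_nonpos (by linarith : t ≤ 0)]
    exact le_max_of_le_left (by rw [abs_le]; constructor <;> linarith)
  rcases le_total t k with h' | h'
  · rw [min_eq_left h', max_eq_left h, sub_self, abs_zero]
    exact le_max_right _ _
  · rw [min_eq_right h', max_eq_left (by linarith : -k ≤ k), abs_of_nonneg (by linarith : 0 ≤ t)]
    exact le_max_of_le_left (by rw [abs_le]; constructor <;> linarith)

lemma max_sum_sub_sum_le {ι : Type*} (s : Finset ι) (a b : ι → ℝ) :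
    max (∑ i ∈ s, a i - ∑ i ∈ s, b i) 0 ≤ ∑ i ∈ s, max (a i - b i) 0 := by
  refine max_le ?_ (Finset.sum_nonneg fun i _ => le_max_right _ _)
  rw [← Finset.sum_sub_distrib]
  exact Finset.sum_le_sum fun i _ => le_max_left _ _

lemma abs_max_sub_le {s t : ℝ} (ht : 0 ≤ t) : |max (s - t) 0| ≤ |s| := by
  rw [abs_of_nonneg (le_max_right _ _)]
  exact max_le (by linarith [le_abs_self s]) (abs_nonneg _)

lemma MeasureTheory.Integrable.max_sub_const {α : Type*} [MeasurableSpace α] {μ : Measure α}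
    {f : α → ℝ} (hf : Integrable f μ) {t : ℝ} (ht : 0 ≤ t) :
    Integrable (fun y => max (f y - t) 0) μ :=
  hf.abs.mono' ((by fun_prop : Continuous fun s : ℝ => max (s - t) 0).comp_aestronglyMeasurable
    hf.aestronglyMeasurable) (Eventually.of_forall fun _ => abs_max_sub_le ht)

lemma tendsto_integral_max_sub_atTop {α : Type*} [MeasurableSpace α] {μ : Measure α}
    {f : α → ℝ} (hf : Integrable f μ) :
    Tendsto (fun t : ℝ => ∫ y, max (f y - t) 0 ∂μ) atTop (𝓝 0) := by
  have hlim : Tendsto (fun t : ℝ => ∫ y, max (f y - t) 0 ∂μ) atTop (𝓝 (∫ _y, (0 : ℝ) ∂μ)) := by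
    refine tendsto_integral_filter_of_dominated_convergence (fun y => |f y|)
      ((eventually_ge_atTop 0).mono fun t ht => (hf.max_sub_const ht).aestronglyMeasurable)
      ((eventually_ge_atTop 0).mono fun t ht => Eventually.of_forall fun y => abs_max_sub_le ht)
      hf.abs (Eventually.of_forall fun y => tendsto_const_nhds.congr' ?_)
    filter_upwards [eventually_ge_atTop (f y)] with t ht
    exact (max_eq_right (by linarith)).symm
  simpa using hlim

section Couplings

variable {n : ℕ} {X : Fin n → Type*} [∀ i, MeasurableSpace (X i)]
  {μ : ∀ i, Measure (X i)} {π : Measure (∀ i, X i)}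

lemma IsCoupling.integrable_comp_eval (hπ : IsCoupling μ π) (i : Fin n) {g : X i → ℝ}
    (hg : Integrable g (μ i)) : Integrable (fun x => g (x i)) π := by
  rw [← hπ.2 i] at hg
  exact (integrable_map_measure hg.aestronglyMeasurable
    (measurable_pi_apply i).aemeasurable).mp hg

lemma IsCoupling.integral_comp_eval (hπ : IsCoupling μ π) (i : Fin n) {g : X i → ℝ}
    (hg : AEStronglyMeasurable g (μ i)) : ∫ x, g (x i) ∂π = ∫ y, g y ∂(μ i) := by
  rw [← hπ.2 i] at hg ⊢
  exact (integral_map (measurable_pi_apply i).aemeasurable hg).symm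

variable [∀ i, TopologicalSpace (X i)]

lemma normL_nonneg (h : (∀ i, X i) → ℝ) : 0 ≤ normL μ h :=
  Real.sSup_nonneg <| by
    rintro r ⟨π, -, rfl⟩
    exact integral_nonneg fun x => abs_nonneg _

lemma normL_le {h : (∀ i, X i) → ℝ} {C : ℝ} (hC : 0 ≤ C)
    (hπ : ∀ π, IsCoupling μ π → ∫ x, |h x| ∂π ≤ C) : normL μ h ≤ C :=
  Real.sSup_le (by rintro r ⟨π, hπC, rfl⟩; exact hπ π hπC) hC

lemma normL_le_of_abs_le [∀ i, IsProbabilityMeasure (μ i)] {h : (∀ i, X i) → ℝ} {C : ℝ}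
    (hC : ∀ x, |h x| ≤ C) : normL μ h ≤ C := by
  have : ∀ i, Nonempty (X i) := fun i => nonempty_of_isProbabilityMeasure (μ i)
  refine normL_le ((abs_nonneg _).trans (hC (Classical.arbitrary _))) fun π hπ => ?_
  have := hπ.1
  calc ∫ x, |h x| ∂π ≤ ∫ _x, C ∂π :=
        integral_mono_of_nonneg (Eventually.of_forall fun x => abs_nonneg _)
          (integrable_const C) (Eventually.of_forall hC)
    _ = C := by simp

lemma normL_le_sum_integral {h : (∀ i, X i) → ℝ} {g : ∀ i, X i → ℝ}
    (hg : ∀ i, Integrable (g i) (μ i)) (hg_nonneg : ∀ i y, 0 ≤ g i y)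
    (hh : ∀ x, |h x| ≤ ∑ i, g i (x i)) : normL μ h ≤ ∑ i, ∫ y, g i y ∂(μ i) := by
  refine normL_le (Finset.sum_nonneg fun i _ => integral_nonneg (hg_nonneg i)) fun π hπ => ?_
  calc ∫ x, |h x| ∂π ≤ ∫ x, ∑ i, g i (x i) ∂π :=
        integral_mono_of_nonneg (Eventually.of_forall fun x => abs_nonneg _)
          (integrable_finsetSum _ fun i _ => hπ.integrable_comp_eval i (hg i))
          (Eventually.of_forall hh)
    _ = ∑ i, ∫ x, g i (x i) ∂π :=
        integral_finsetSum _ fun i _ => hπ.integrable_comp_eval i (hg i)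
    _ = ∑ i, ∫ y, g i y ∂(μ i) :=
        Finset.sum_congr rfl fun i _ => hπ.integral_comp_eval i (hg i).aestronglyMeasurable

/-- The level `k` is spread over the `n` coordinates as `k / (n + 1)`; the `+ 1` avoids dividing
by zero when `n = 0`. -/
lemma normL_sub_max_min_le {h : (∀ i, X i) → ℝ} {f : ∀ i, X i → ℝ}
    (hf : ∀ i, Integrable (f i) (μ i)) (hh : ∀ x, |h x| ≤ ∑ i, f i (x i)) {k : ℝ}
    (hk : 0 ≤ k) :
    normL μ (fun x => h x - max (min (h x) k) (-k)) ≤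
      ∑ i, ∫ y, max (f i y - k / (n + 1)) 0 ∂(μ i) := by
  refine normL_le_sum_integral (fun i => (hf i).max_sub_const (by positivity))
    (fun i y => le_max_right _ _) fun x => ?_
  have hspread : ∑ _i : Fin n, k / (n + 1) ≤ k := by
    rw [Finset.sum_const, Finset.card_univ, Fintype.card_fin, nsmul_eq_mul, ← mul_div_assoc,
      div_le_iff₀ (by positivity)]
    nlinarith
  calc |h x - max (min (h x) k) (-k)| ≤ max (|h x| - k) 0 := abs_sub_max_min_le _ hk
    _ ≤ max (∑ i, f i (x i) - ∑ _i : Fin n, k / (n + 1)) 0 := by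
        gcongr
        linarith [hh x]
    _ ≤ ∑ i, max (f i (x i) - k / (n + 1)) 0 := max_sum_sub_sum_le _ _ _

lemma MemCL.tendsto_normL_sub_max_min {h : (∀ i, X i) → ℝ} (hh : MemCL μ h) :
    Tendsto (fun k : ℕ => normL μ (fun x => h x - max (min (h x) (k : ℝ)) (-(k : ℝ))))
      atTop (𝓝 0) := by
  obtain ⟨-, f, hf, hbound⟩ := hh
  have hlevel : Tendsto (fun k : ℕ => (k : ℝ) / (n + 1)) atTop atTop :=
    tendsto_natCast_atTop_atTop.atTop_div_const (by positivity)
  have htail : Tendsto (fun k : ℕ => ∑ i, ∫ y, max (f i y - k / (n + 1)) 0 ∂(μ i))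
      atTop (𝓝 0) := by
    simpa using tendsto_finsetSum Finset.univ fun i _ =>
      (tendsto_integral_max_sub_atTop (hf i).2).comp hlevel
  exact tendsto_of_tendsto_of_tendsto_of_le_of_le tendsto_const_nhds htail
    (fun k => normL_nonneg _)
    (fun k => normL_sub_max_min_le (fun i => (hf i).2) hbound k.cast_nonneg)

end Couplings

theorem Cb_dense_in_CL_general {n : ℕ} {X : Fin n → Type*}
    [∀ i, TopologicalSpace (X i)]
    [∀ i, MeasurableSpace (X i)]
    (μ : ∀ i, Measure (X i)) [∀ i, IsProbabilityMeasure (μ i)] :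
    (∀ h : (∀ i, X i) → ℝ, Continuous h → ∀ C : ℝ, (∀ x, |h x| ≤ C) → normL μ h ≤ C) ∧
    (∀ h : (∀ i, X i) → ℝ, MemCL μ h → ∀ ε > (0 : ℝ), ∃ g : (∀ i, X i) → ℝ,
      Continuous g ∧ (∃ C : ℝ, ∀ x, |g x| ≤ C) ∧ normL μ (fun x => h x - g x) < ε) ∧
    (∀ h : (∀ i, X i) → ℝ, MemCL μ h →
      Tendsto (fun k : ℕ =>
          normL μ (fun x => h x - max (min (h x) (k : ℝ)) (-(k : ℝ))))
        atTop (nhds 0)) := by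
  refine ⟨fun h _ C hC => normL_le_of_abs_le hC, fun h hh ε hε => ?_,
    fun h hh => hh.tendsto_normL_sub_max_min⟩
  obtain ⟨k, hk⟩ := (hh.tendsto_normL_sub_max_min.eventually_lt_const hε).exists
  exact ⟨fun x => max (min (h x) (k : ℝ)) (-(k : ℝ)),
    (hh.1.min continuous_const).max continuous_const,
    ⟨k, fun x => abs_max_min_le _ k.cast_nonneg⟩, hk⟩

/-- `C_b(X)` is dense in `C_L(μ)` for `‖·‖_L`; the inclusion is continuous since
`‖h‖_L ≤ sup_x |h(x)|` for bounded continuous `h`; and concretely the truncations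
`h^k_k = max (min h k) (-k)` of any `h ∈ C_L(μ)` satisfy `‖h - h^k_k‖_L → 0`. -/
theorem Cb_dense_in_CL {n : ℕ} {X : Fin n → Type*}
    [∀ i, TopologicalSpace (X i)] [∀ i, PolishSpace (X i)]
    [∀ i, MeasurableSpace (X i)] [∀ i, BorelSpace (X i)]
    (μ : ∀ i, Measure (X i)) [∀ i, IsProbabilityMeasure (μ i)] :
    (∀ h : (∀ i, X i) → ℝ, Continuous h → ∀ C : ℝ, (∀ x, |h x| ≤ C) → normL μ h ≤ C) ∧
    (∀ h : (∀ i, X i) → ℝ, MemCL μ h → ∀ ε > (0 : ℝ), ∃ g : (∀ i, X i) → ℝ,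
      Continuous g ∧ (∃ C : ℝ, ∀ x, |g x| ≤ C) ∧ normL μ (fun x => h x - g x) < ε) ∧
    (∀ h : (∀ i, X i) → ℝ, MemCL μ h →
      Tendsto (fun k : ℕ =>
          normL μ (fun x => h x - max (min (h x) (k : ℝ)) (-(k : ℝ))))
        atTop (nhds 0)) :=
  Cb_dense_in_CL_general μ
end

section
/- For every h ∈ C_L(μ), the functional π ↦ ∫_X h dπ from Π(μ) to ℝ is continuous with respect to the topology of weak convergence of measures; i.e., if a sequence (π_k) in Π(μ) converges weakly to π ∈ Π(μ) (meaning ∫ρ dπ_k → ∫ρ dπ for every bounded continuous ρ), then ∫h dπ_k → ∫h dπ. -/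
open MeasureTheory Filter Topology

/-! Dominate `|h|` by the separable function `G x = ∑ i |f i (x i)|`; its integral
`∑ i ∫ |f i| dμ i` is the same for every coupling. Clamping `h` to `[-M, M]` gives a bounded
continuous function, to which weak convergence applies, and the clamping error is at most
`∫ (G - min G M) dπ`. This error converges along the sequence, since `∫ G` is constant and
`min G M` is bounded continuous, and its limit `∫ (G - min G M) dπlim` is small for large `M`. -/

lemma tendsto_of_forall_approx {ι α : Type*} [PseudoMetricSpace α] {l : Filter ι} {u : ι → α}
    {a : α} (happrox : ∀ ε > 0, ∃ (v : ι → α) (b : α), Tendsto v l (𝓝 b) ∧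
      (∀ᶠ k in l, dist (u k) (v k) < ε) ∧ dist a b < ε) :
    Tendsto u l (𝓝 a) := by
  refine Metric.tendsto_nhds.2 fun ε hε => ?_
  obtain ⟨v, b, hvb, huv, hab⟩ := happrox (ε / 3) (by positivity)
  filter_upwards [huv, Metric.tendsto_nhds.1 hvb (ε / 3) (by positivity)] with k hk hk'
  calc dist (u k) a ≤ dist (u k) (v k) + dist (v k) b + dist a b := by
        linarith [dist_triangle (u k) (v k) a, dist_triangle (v k) b a, dist_comm a b]
    _ < ε := by linarith

lemma abs_sub_clamp_le {t s : ℝ} (M : ℝ) (hts : |t| ≤ s) :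
    |t - max (min t M) (-M)| ≤ s - min s M := by
  rw [abs_le] at *
  constructor <;> grind

lemma abs_clamp_le (t M : ℝ) : |max (min t M) (-M)| ≤ |M| := by
  rw [abs_le]
  constructor <;> grind [le_abs_self, neg_abs_le]

section Truncation

variable {Ω : Type*} [MeasurableSpace Ω] {μ : Measure Ω} {h G : Ω → ℝ}

lemma tendsto_integral_min_atTop (hG : Integrable G μ) :
    Tendsto (fun M : ℝ => ∫ x, min (G x) M ∂μ) atTop (𝓝 (∫ x, G x ∂μ)) := by
  refine tendsto_integral_filter_of_dominated_convergence (fun x => |G x|)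
    (Eventually.of_forall fun M => hG.aestronglyMeasurable.inf aestronglyMeasurable_const)
    ?_ hG.abs (ae_of_all _ fun x => ?_)
  · filter_upwards [eventually_ge_atTop 0] with M hM
    refine ae_of_all _ fun x => ?_
    rw [Real.norm_eq_abs, abs_le]
    constructor <;> grind [le_abs_self, neg_abs_le]
  · refine tendsto_const_nhds.congr' ?_
    filter_upwards [eventually_ge_atTop (G x)] with M hM
    exact (min_eq_left hM).symm

variable [IsFiniteMeasure μ]

lemma abs_integral_sub_integral_clamp_le (hh : Measurable h) (hG : Integrable G μ)
    (hhG : ∀ x, |h x| ≤ G x) (M : ℝ) :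
    |∫ x, h x ∂μ - ∫ x, max (min (h x) M) (-M) ∂μ| ≤
      ∫ x, G x ∂μ - ∫ x, min (G x) M ∂μ := by
  have hh_int : Integrable h μ :=
    hG.mono' hh.aestronglyMeasurable (ae_of_all _ fun x => hhG x)
  have hclamp_int : Integrable (fun x => max (min (h x) M) (-M)) μ :=
    (hh_int.inf (integrable_const M)).sup (integrable_const (-M))
  have hmin_int : Integrable (fun x => min (G x) M) μ := hG.inf (integrable_const M)
  rw [← integral_sub hh_int hclamp_int, ← integral_sub hG hmin_int]
  exact abs_integral_le_integral_abs.trans (integral_mono (hh_int.sub hclamp_int).abs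
    (hG.sub hmin_int) fun x => abs_sub_clamp_le M (hhG x))

end Truncation

theorem tendsto_integral_of_abs_le_of_tendsto_integral {Ω ι : Type*} [TopologicalSpace Ω]
    [MeasurableSpace Ω] {l : Filter ι} {π : ι → Measure Ω} {πlim : Measure Ω}
    [∀ k, IsFiniteMeasure (π k)] [IsFiniteMeasure πlim] {h G : Ω → ℝ}
    (hh : Continuous h) (hh_meas : Measurable h) (hG : Continuous G) (hhG : ∀ x, |h x| ≤ G x)
    (hGπ : ∀ k, Integrable G (π k)) (hGlim : Integrable G πlim)
    (hGconv : Tendsto (fun k => ∫ x, G x ∂(π k)) l (𝓝 (∫ x, G x ∂πlim)))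
    (hconv : ∀ ρ : Ω → ℝ, Continuous ρ → (∃ C : ℝ, ∀ x, |ρ x| ≤ C) →
      Tendsto (fun k => ∫ x, ρ x ∂(π k)) l (𝓝 (∫ x, ρ x ∂πlim))) :
    Tendsto (fun k => ∫ x, h x ∂(π k)) l (𝓝 (∫ x, h x ∂πlim)) := by
  refine tendsto_of_forall_approx fun ε hε => ?_
  obtain ⟨M, hM⟩ := ((tendsto_integral_min_atTop hGlim).eventually
    (Metric.ball_mem_nhds _ hε)).exists
  set err : Measure Ω → ℝ := fun ν => ∫ x, G x ∂ν - ∫ x, min (G x) M ∂ν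
  have herr_lim : err πlim < ε := (abs_sub_lt_iff.1 hM).2
  have hmin_bdd (x : Ω) : |min (G x) M| ≤ |M| := by
    have hG_nonneg : 0 ≤ G x := (abs_nonneg _).trans (hhG x)
    rw [abs_le]
    constructor <;> grind [le_abs_self, neg_abs_le]
  have herr : ∀ᶠ k in l, err (π k) < ε :=
    (hGconv.sub (hconv _ (hG.min continuous_const) ⟨|M|, hmin_bdd⟩)).eventually
      (gt_mem_nhds herr_lim)
  refine ⟨fun k => ∫ x, max (min (h x) M) (-M) ∂(π k), ∫ x, max (min (h x) M) (-M) ∂πlim,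
    hconv _ ((hh.min continuous_const).max continuous_const) ⟨|M|, fun x => abs_clamp_le _ _⟩,
    herr.mono fun k hk => ?_, ?_⟩
  · exact (abs_integral_sub_integral_clamp_le hh_meas (hGπ k) hhG M).trans_lt hk
  · exact (abs_integral_sub_integral_clamp_le hh_meas hGlim hhG M).trans_lt herr_lim

namespace IsCoupling

variable {n : ℕ} {X : Fin n → Type*} [∀ i, MeasurableSpace (X i)] {μ : ∀ i, Measure (X i)}
  {π : Measure (∀ i, X i)}

lemma integrable_comp_eval_s2 (hπ : IsCoupling μ π) {i : Fin n} {g : X i → ℝ}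
    (hg : Integrable g (μ i)) : Integrable (fun x => g (x i)) π := by
  rw [← hπ.2 i] at hg
  exact hg.comp_measurable (measurable_pi_apply i)

lemma integral_comp_eval_s2 (hπ : IsCoupling μ π) {i : Fin n} {g : X i → ℝ}
    (hg : Integrable g (μ i)) : ∫ x, g (x i) ∂π = ∫ y, g y ∂(μ i) := by
  rw [← hπ.2 i] at hg ⊢
  exact (integral_map (measurable_pi_apply i).aemeasurable hg.aestronglyMeasurable).symm

end IsCoupling

theorem integral_CL_weakly_continuous_general {n : ℕ} {X : Fin n → Type*}
    [∀ i, TopologicalSpace (X i)] [∀ i, PolishSpace (X i)]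
    [∀ i, MeasurableSpace (X i)] [∀ i, BorelSpace (X i)]
    (μ : ∀ i, Measure (X i))
    (h : (∀ i, X i) → ℝ) (hh : MemCL μ h)
    (π : ℕ → Measure (∀ i, X i)) (πlim : Measure (∀ i, X i))
    (hπ : ∀ k, IsCoupling μ (π k)) (hπlim : IsCoupling μ πlim)
    (hconv : ∀ ρ : (∀ i, X i) → ℝ, Continuous ρ → (∃ C : ℝ, ∀ x, |ρ x| ≤ C) →
      Tendsto (fun k => ∫ x, ρ x ∂(π k)) atTop (nhds (∫ x, ρ x ∂πlim))) :
    Tendsto (fun k => ∫ x, h x ∂(π k)) atTop (nhds (∫ x, h x ∂πlim)) := by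
  obtain ⟨hh_cont, f, hf, hhf⟩ := hh
  have := fun k => (hπ k).1
  have := hπlim.1
  set G : (∀ i, X i) → ℝ := fun x => ∑ i, |f i (x i)|
  have hG_int {ν} (hν : IsCoupling μ ν) : Integrable G ν :=
    integrable_finsetSum _ fun i _ => hν.integrable_comp_eval_s2 (hf i).2.abs
  have hG_integral {ν} (hν : IsCoupling μ ν) : ∫ x, G x ∂ν = ∑ i, ∫ y, |f i y| ∂(μ i) := by
    rw [integral_finsetSum _ fun i _ => hν.integrable_comp_eval_s2 (hf i).2.abs]
    exact Finset.sum_congr rfl fun i _ => hν.integral_comp_eval_s2 (hf i).2.abs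
  refine tendsto_integral_of_abs_le_of_tendsto_integral (G := G) hh_cont hh_cont.measurable
    (continuous_finsetSum _ fun i _ => ((hf i).1.comp (continuous_apply i)).abs)
    (fun x => (hhf x).trans (Finset.sum_le_sum fun i _ => le_abs_self _))
    (fun k => hG_int (hπ k)) (hG_int hπlim) ?_ hconv
  rw [hG_integral hπlim]
  exact tendsto_const_nhds.congr fun k => (hG_integral (hπ k)).symm

/-- for every `h ∈ C_L(μ)`, the functional `π ↦ ∫ h dπ` on `Π(μ)` is continuous
for weak convergence: if `π_k → π` weakly in `Π(μ)` (i.e. `∫ ρ dπ_k → ∫ ρ dπ` for all bounded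
continuous `ρ`), then `∫ h dπ_k → ∫ h dπ`. -/
theorem integral_CL_weakly_continuous {n : ℕ} {X : Fin n → Type*}
    [∀ i, TopologicalSpace (X i)] [∀ i, PolishSpace (X i)]
    [∀ i, MeasurableSpace (X i)] [∀ i, BorelSpace (X i)]
    (μ : ∀ i, Measure (X i)) [∀ i, IsProbabilityMeasure (μ i)]
    (h : (∀ i, X i) → ℝ) (hh : MemCL μ h)
    (π : ℕ → Measure (∀ i, X i)) (πlim : Measure (∀ i, X i))
    (hπ : ∀ k, IsCoupling μ (π k)) (hπlim : IsCoupling μ πlim)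
    (hconv : ∀ ρ : (∀ i, X i) → ℝ, Continuous ρ → (∃ C : ℝ, ∀ x, |ρ x| ≤ C) →
      Tendsto (fun k => ∫ x, ρ x ∂(π k)) atTop (nhds (∫ x, ρ x ∂πlim))) :
    Tendsto (fun k => ∫ x, h x ∂(π k)) atTop (nhds (∫ x, h x ∂πlim)) :=
  integral_CL_weakly_continuous_general μ h hh π πlim hπ hπlim hconv
end

section
/- Let G be a compact topological group (acting continuously and diagonally on X) with left-invariant probability Haar measure χ, such that for every f ∈ C_b(X) and x ∈ X the map g ↦ f(g(x)) is measurable. Define W_1 := span{ w ∈ W_G, f − ∫_G f∘g dχ(g) : f ∈ C_b(X) }. Then for any Borel probability measure π on X: ∫ω dπ = 0 for all ω ∈ W_1 if and only if ∫ω dπ = 0 for all ω ∈ W_G. -/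
open MeasureTheory Filter Topology

/-- `W_G = span { h ∘ g - h : g ∈ G, h ∈ C_b(X) }`, with `G` acting diagonally. -/
def WG (G : Type*) [Group G] {n : ℕ} (X : Fin n → Type*) [∀ i, TopologicalSpace (X i)]
    [∀ i, MulAction G (X i)] : Submodule ℝ ((∀ i, X i) → ℝ) :=
  Submodule.span ℝ {w | ∃ (g : G) (h : (∀ i, X i) → ℝ),
    Continuous h ∧ (∃ C : ℝ, ∀ x, |h x| ≤ C) ∧ w = fun x => h (g • x) - h x}

/-- `W_1 = span { w ∈ W_G, f - ∫_G f∘g dχ(g) : f ∈ C_b(X) }`. -/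
def W1 (G : Type*) [Group G] [MeasurableSpace G] (χ : Measure G)
    {n : ℕ} (X : Fin n → Type*) [∀ i, TopologicalSpace (X i)]
    [∀ i, MulAction G (X i)] : Submodule ℝ ((∀ i, X i) → ℝ) :=
  WG G X ⊔ Submodule.span ℝ {w | ∃ f : (∀ i, X i) → ℝ,
    Continuous f ∧ (∃ C : ℝ, ∀ x, |f x| ≤ C) ∧
    w = fun x => f x - ∫ g, f (g • x) ∂χ}

/-
A measure `π` vanishing on `W_G` is `G`-invariant on bounded continuous functions. By Fubini,
`∫ (∫ f(g • x) dχ(g)) dπ(x) = ∫ (∫ f(g • x) dπ(x)) dχ(g) = ∫ f dπ`, so `π` also kills each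
`f - ∫_G f ∘ g dχ`. As integrable functions with zero `π`-integral form a submodule, `π` vanishes
on all of `W_1`.
-/

open TopologicalSpace

/-- Integrability is part of the condition: it makes this a submodule, which it would not be with
Lean's junk value `∫ f ∂μ = 0` for non-integrable `f`. -/
def kerIntegral {α : Type*} [MeasurableSpace α] (μ : Measure α) : Submodule ℝ (α → ℝ) where
  carrier := {f | Integrable f μ ∧ ∫ x, f x ∂μ = 0}
  add_mem' {f g} hf hg := ⟨hf.1.add hg.1, by
    simp only [Pi.add_apply, integral_add hf.1 hg.1, hf.2, hg.2, add_zero]⟩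
  zero_mem' := ⟨integrable_zero _ _ _, integral_zero _ _⟩
  smul_mem' c f hf := ⟨hf.1.smul c, by
    simp only [Pi.smul_apply, integral_smul, hf.2, smul_zero]⟩

theorem Continuous.integrable_of_abs_le {Y : Type*} [TopologicalSpace Y] [MeasurableSpace Y]
    [OpensMeasurableSpace Y] {μ : Measure Y} [IsFiniteMeasure μ] {f : Y → ℝ}
    (hf : Continuous f) {C : ℝ} (hC : ∀ x, |f x| ≤ C) : Integrable f μ :=
  .of_bound hf.aestronglyMeasurable C (.of_forall hC)

section Average

variable {G Y : Type*} [Group G] [MulAction G Y]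
  [TopologicalSpace Y] [MeasurableSpace Y] [OpensMeasurableSpace Y]
  {f : Y → ℝ} {C : ℝ} {π : Measure Y}

theorem integrable_comp_smul [IsFiniteMeasure π] (hcont : ∀ g : G, Continuous fun y : Y => g • y)
    (hf : Continuous f) (hC : ∀ y, |f y| ≤ C) (g : G) : Integrable (fun x => f (g • x)) π :=
  (hf.comp (hcont g)).integrable_of_abs_le fun x => hC (g • x)

variable [MeasurableSpace G] {χ : Measure G} [MetrizableSpace Y] [SecondCountableTopology Y]

theorem stronglyMeasurable_uncurry_comp_smul (hcont : ∀ g : G, Continuous fun y : Y => g • y)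
    (hf : Continuous f) (hmeas : ∀ x : Y, Measurable fun g : G => f (g • x)) :
    StronglyMeasurable (Function.uncurry fun (x : Y) (g : G) => f (g • x)) :=
  stronglyMeasurable_uncurry_of_continuous_of_stronglyMeasurable
    (fun g => hf.comp (hcont g)) (fun x => (hmeas x).stronglyMeasurable)

theorem integrable_integral_comp_smul [IsProbabilityMeasure χ] [IsFiniteMeasure π]
    (hcont : ∀ g : G, Continuous fun y : Y => g • y) (hf : Continuous f) (hC : ∀ y, |f y| ≤ C)
    (hmeas : ∀ x : Y, Measurable fun g : G => f (g • x)) :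
    Integrable (fun x => ∫ g, f (g • x) ∂χ) π :=
  .of_bound
    (stronglyMeasurable_uncurry_comp_smul hcont hf hmeas).integral_prod_right'.aestronglyMeasurable
    C (.of_forall fun x => by
      simpa using norm_integral_le_of_norm_le_const (μ := χ) (f := fun g => f (g • x))
        (.of_forall fun g => hC (g • x)))

theorem integral_integral_comp_smul_of_invariant [IsProbabilityMeasure χ] [IsFiniteMeasure π]
    (hcont : ∀ g : G, Continuous fun y : Y => g • y) (hf : Continuous f) (hC : ∀ y, |f y| ≤ C)
    (hmeas : ∀ x : Y, Measurable fun g : G => f (g • x))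
    (hπ : ∀ g : G, ∫ x, f (g • x) ∂π = ∫ x, f x ∂π) :
    ∫ x, ∫ g, f (g • x) ∂χ ∂π = ∫ x, f x ∂π := by
  have hint : Integrable (Function.uncurry fun (x : Y) (g : G) => f (g • x)) (π.prod χ) :=
    .of_bound (stronglyMeasurable_uncurry_comp_smul hcont hf hmeas).aestronglyMeasurable C
      (.of_forall fun p => hC (p.2 • p.1))
  rw [integral_integral_swap hint]
  simp [hπ]

theorem sub_integral_comp_smul_mem_kerIntegral [IsProbabilityMeasure χ] [IsFiniteMeasure π]
    (hcont : ∀ g : G, Continuous fun y : Y => g • y) (hf : Continuous f) (hC : ∀ y, |f y| ≤ C)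
    (hmeas : ∀ x : Y, Measurable fun g : G => f (g • x))
    (hπ : ∀ g : G, ∫ x, f (g • x) ∂π = ∫ x, f x ∂π) :
    (fun x => f x - ∫ g, f (g • x) ∂χ) ∈ kerIntegral π := by
  have hfi : Integrable f π := hf.integrable_of_abs_le hC
  have hav : Integrable (fun x => ∫ g, f (g • x) ∂χ) π :=
    integrable_integral_comp_smul hcont hf hC hmeas
  refine ⟨hfi.sub hav, ?_⟩
  rw [integral_sub hfi hav, integral_integral_comp_smul_of_invariant hcont hf hC hmeas hπ,
    sub_self]

end Average

section Diagonal

variable {n : ℕ} {X : Fin n → Type*} [∀ i, TopologicalSpace (X i)]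
  [∀ i, SecondCountableTopology (X i)] [∀ i, MeasurableSpace (X i)]
  [∀ i, OpensMeasurableSpace (X i)] {G : Type*} [Group G] [∀ i, MulAction G (X i)]
  {π : Measure (∀ i, X i)} [IsFiniteMeasure π]

theorem WG_le_kerIntegral (hcont : ∀ g : G, Continuous fun x : (∀ i, X i) => g • x)
    (H : ∀ ω ∈ WG G X, ∫ x, ω x ∂π = 0) : WG G X ≤ kerIntegral π := by
  refine Submodule.span_le.2 ?_
  rintro _ ⟨g, h, hh, ⟨C, hC⟩, rfl⟩
  exact ⟨(integrable_comp_smul hcont hh hC g).sub (hh.integrable_of_abs_le hC),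
    H _ (Submodule.subset_span ⟨g, h, hh, ⟨C, hC⟩, rfl⟩)⟩

theorem integral_comp_smul_of_vanish_WG (hcont : ∀ g : G, Continuous fun x : (∀ i, X i) => g • x)
    (H : ∀ ω ∈ WG G X, ∫ x, ω x ∂π = 0) {f : (∀ i, X i) → ℝ} (hf : Continuous f) {C : ℝ}
    (hC : ∀ x, |f x| ≤ C) (g : G) : ∫ x, f (g • x) ∂π = ∫ x, f x ∂π := by
  have h0 := H _ (Submodule.subset_span ⟨g, f, hf, ⟨C, hC⟩, rfl⟩)
  rwa [integral_sub (integrable_comp_smul hcont hf hC g) (hf.integrable_of_abs_le hC),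
    sub_eq_zero] at h0

end Diagonal

theorem vanish_W1_iff_vanish_WG_general {n : ℕ} {X : Fin n → Type*}
    [∀ i, TopologicalSpace (X i)] [∀ i, PolishSpace (X i)]
    [∀ i, MeasurableSpace (X i)] [∀ i, BorelSpace (X i)]
    {G : Type*} [Group G]
    [MeasurableSpace G]
    [∀ i, MulAction G (X i)]
    (hcont : ∀ (g : G) (i : Fin n), Continuous (fun y : X i => g • y))
    (χ : Measure G) [IsProbabilityMeasure χ]
    (hmeas : ∀ f : (∀ i, X i) → ℝ, Continuous f →
      ∀ x : ∀ i, X i, Measurable (fun g : G => f (g • x)))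
    (π : Measure (∀ i, X i)) [IsProbabilityMeasure π] :
    (∀ ω ∈ W1 G χ X, ∫ x, ω x ∂π = 0) ↔ (∀ ω ∈ WG G X, ∫ x, ω x ∂π = 0) := by
  have hsmul (g : G) : Continuous fun x : (∀ i, X i) => g • x :=
    continuous_pi fun i => (hcont g i).comp (continuous_apply i)
  refine ⟨fun H ω hω => H ω (le_sup_left (a := WG G X) hω), fun H => ?_⟩
  suffices W1 G χ X ≤ kerIntegral π from fun ω hω => (this hω).2
  refine sup_le (WG_le_kerIntegral hsmul H) (Submodule.span_le.2 ?_)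
  rintro _ ⟨f, hf, ⟨C, hC⟩, rfl⟩
  exact sub_integral_comp_smul_mem_kerIntegral hsmul hf hC (hmeas f hf)
    (integral_comp_smul_of_vanish_WG hsmul H hf hC)

/-- for a compact topological group `G` with left-invariant probability Haar
measure `χ` (such that `g ↦ f(g • x)` is measurable for `f ∈ C_b(X)`, `x ∈ X`), a Borel
probability measure `π` on `X` vanishes on `W_1` iff it vanishes on `W_G`. -/
theorem vanish_W1_iff_vanish_WG {n : ℕ} {X : Fin n → Type*}
    [∀ i, TopologicalSpace (X i)] [∀ i, PolishSpace (X i)]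
    [∀ i, MeasurableSpace (X i)] [∀ i, BorelSpace (X i)]
    {G : Type*} [Group G] [TopologicalSpace G] [IsTopologicalGroup G] [CompactSpace G]
    [MeasurableSpace G] [BorelSpace G]
    [∀ i, MulAction G (X i)]
    (hcont : ∀ (g : G) (i : Fin n), Continuous (fun y : X i => g • y))
    (χ : Measure G) [IsProbabilityMeasure χ]
    (hχ : ∀ g : G, Measure.map (fun g' => g * g') χ = χ)
    (hmeas : ∀ f : (∀ i, X i) → ℝ, Continuous f →
      ∀ x : ∀ i, X i, Measurable (fun g : G => f (g • x)))
    (π : Measure (∀ i, X i)) [IsProbabilityMeasure π] :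
    (∀ ω ∈ W1 G χ X, ∫ x, ω x ∂π = 0) ↔ (∀ ω ∈ WG G X, ∫ x, ω x ∂π = 0) :=
  vanish_W1_iff_vanish_WG_general hcont χ hmeas π
end
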